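/- Let r₀ = 12^(−1/4) and S₃ = {(r₀, 0), (r₀·e^{2πi/3}, 0), (r₀·e^{−2πi/3}, 0)} ⊆ ℂ × ℝ. Every set S ⊆ ℂ × ℝ containing S₃ whose distinct points are pairwise at Korányi distance 1 has at most 4 elements. -/

import Mathlib

/-! A point `(z, t)` at Korányi distance 1 from the three points of `S₃` is equidistant from them.
Writing `ρ = |z|² + r₀²`, the two independent differences of the three distance equations say
`(ρ + t i) z = 0`, so `z = 0`, and then `r₀⁴ + t² = 1` gives `t = ±√(11/12)`. These two points
of the centre are at distance `(11/3)^(1/4) ≠ 1` from each other, so at most one lies in `S`. -/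

open Complex Real

/-- The Korányi (Heisenberg) distance on ℂ × ℝ. -/
noncomputable def kd (p q : ℂ × ℝ) : ℝ :=
  (‖p.1 - q.1‖ ^ 4 +
    (p.2 - q.2 + 2 * (p.1 * (starRingEnd ℂ) q.1).im) ^ 2) ^ ((1 : ℝ) / 4)

lemma Set.encard_triple_le {α : Type*} (a b c : α) : ({a, b, c} : Set α).encard ≤ 3 := by
  classical
  have h := Set.encard_coe_eq_coe_finsetCard ({a, b, c} : Finset α)
  push_cast at h
  rw [h]
  exact_mod_cast Finset.card_le_three

lemma kd_eq_one_iff {p q : ℂ × ℝ} : kd p q = 1 ↔ kd p q ^ 4 = 1 :=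
  (pow_eq_one_iff_of_nonneg (by unfold kd; positivity) four_ne_zero).symm

lemma kd_pow_four (p q : ℂ × ℝ) : kd p q ^ 4 =
    ((p.1.re - q.1.re) ^ 2 + (p.1.im - q.1.im) ^ 2) ^ 2 +
      (p.2 - q.2 + 2 * (p.1.im * q.1.re - p.1.re * q.1.im)) ^ 2 := by
  have hnorm : ‖p.1 - q.1‖ ^ 4 = normSq (p.1 - q.1) ^ 2 := by rw [← Complex.sq_norm]; ring
  rw [kd, ← Real.rpow_natCast, ← Real.rpow_mul (by positivity), hnorm]
  norm_num [normSq_apply, Complex.mul_im]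
  ring

lemma exp_two_pi_I_div_three :
    exp (2 * π * I / 3) = -1 / 2 + (√3 / 2 : ℝ) * I := by
  rw [show 2 * π * I / 3 = (π - π / 3 : ℝ) * I by push_cast; ring, exp_mul_I, ← ofReal_cos,
    ← ofReal_sin, Real.cos_pi_sub, Real.sin_pi_sub, cos_pi_div_three, sin_pi_div_three]
  push_cast; ring

lemma exp_neg_two_pi_I_div_three :
    exp (-(2 * π * I) / 3) = -1 / 2 - (√3 / 2 : ℝ) * I := by
  rw [show -(2 * π * I) / 3 = (-(π - π / 3) : ℝ) * I by push_cast; ring, exp_mul_I, ← ofReal_cos,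
    ← ofReal_sin, Real.cos_neg, Real.sin_neg, Real.cos_pi_sub, Real.sin_pi_sub, cos_pi_div_three,
    sin_pi_div_three]
  push_cast; ring

lemma fst_eq_zero_of_kd_triangle_eq {r : ℝ} (hr : 0 < r) {p : ℂ × ℝ}
    (h₁ : kd p (r, 0) = kd p (r * exp (2 * π * I / 3), 0))
    (h₂ : kd p (r, 0) = kd p (r * exp (-(2 * π * I) / 3), 0)) : p.1 = 0 := by
  obtain ⟨⟨x, y⟩, t⟩ := p
  have h₁ := congrArg (· ^ 4) h₁
  have h₂ := congrArg (· ^ 4) h₂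
  simp only [kd_pow_four, exp_two_pi_I_div_three, exp_neg_two_pi_I_div_three] at h₁ h₂
  simp only [ofReal_re, ofReal_im, mul_re, mul_im, add_re, add_im, sub_re, sub_im, I_re, I_im,
    div_ofNat_re, div_ofNat_im, neg_re, neg_im, one_re, one_im] at h₁ h₂
  have hu : √3 ^ 2 = 3 := Real.sq_sqrt (by norm_num)
  have hρ : 0 < x ^ 2 + y ^ 2 + r ^ 2 := by positivity
  set ρ := x ^ 2 + y ^ 2 + r ^ 2
  -- With `Eₖ` the fourth power of the distance to the `k`-th vertex and `w = (ρ + t i)(x + y i)`: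
  -- `E₁ + E₂ - 2 E₀ = 12 r Re w` and `E₂ - E₁ = 4 √3 r Im w`.
  have hre : r * (ρ * x - t * y) = 0 := by
    linear_combination -(h₁ + h₂) / 12
      - (r ^ 2 * (x ^ 2 + y ^ 2) / 4 + r ^ 3 * x / 12 + r ^ 4 * (√3 ^ 2 + 5) / 96) * hu
  have him : r * √3 * (ρ * y + t * x) = 0 := by
    linear_combination (h₁ - h₂) / 4 - r ^ 3 * √3 * y / 4 * hu
  have hrot : ((ρ : ℂ) + t * I) * ⟨x, y⟩ = 0 := by
    apply Complex.ext <;>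
      simp only [mul_re, mul_im, add_re, add_im, ofReal_re, ofReal_im, I_re, I_im, mul_zero,
        mul_one, sub_self, add_zero, zero_add, zero_re, zero_im]
    · exact (mul_eq_zero.mp hre).resolve_left hr.ne'
    · exact (mul_eq_zero.mp him).resolve_left (by positivity)
  refine (mul_eq_zero.mp hrot).resolve_left fun h ↦ hρ.ne' ?_
  simpa only [add_re, ofReal_re, mul_re, I_re, mul_zero, ofReal_im, I_im, mul_one, sub_self,
    add_zero, zero_re] using congrArg re h

lemma fst_eq_zero_and_snd_sq_of_kd_triangle_eq_one {r : ℝ} (hr : 0 < r) {p : ℂ × ℝ}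
    (h₀ : kd p (r, 0) = 1) (h₁ : kd p (r * exp (2 * π * I / 3), 0) = 1)
    (h₂ : kd p (r * exp (-(2 * π * I) / 3), 0) = 1) :
    p.1 = 0 ∧ r ^ 4 + p.2 ^ 2 = 1 := by
  have hz := fst_eq_zero_of_kd_triangle_eq hr (h₀.trans h₁.symm) (h₀.trans h₂.symm)
  refine ⟨hz, ?_⟩
  rw [kd_eq_one_iff, kd_pow_four, hz] at h₀
  simp only [zero_re, zero_im, ofReal_re, ofReal_im] at h₀
  linear_combination h₀

lemma subsingleton_of_pairwise_kd_eq_one_on_axis {A : Set (ℂ × ℝ)} {c : ℝ} (hc : 4 * c ≠ 1)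
    (hA : ∀ p ∈ A, p.1 = 0 ∧ p.2 ^ 2 = c) (hd : ∀ p ∈ A, ∀ q ∈ A, p ≠ q → kd p q = 1) :
    A.Subsingleton := by
  intro p hp q hq
  by_contra hne
  obtain ⟨hpz, hpc⟩ := hA p hp
  obtain ⟨hqz, hqc⟩ := hA q hq
  have hpq := hd p hp q hq hne
  rw [kd_eq_one_iff, kd_pow_four, hpz, hqz] at hpq
  have ht : p.2 ≠ q.2 := fun h ↦ hne (Prod.ext (hpz.trans hqz.symm) h)
  have hneg : q.2 = -p.2 := (sq_eq_sq_iff_eq_or_eq_neg.mp (hqc.trans hpc.symm)).resolve_left ht.symm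
  simp only [zero_re, zero_im, hneg] at hpq
  exact hc (by linear_combination hpq - 4 * hpc)

theorem equilateral_set_containing_canonical_three (S : Set (ℂ × ℝ))
    (hS₃ : let r₀ : ℝ := (12 : ℝ) ^ (-(1 : ℝ) / 4)
      ({((r₀ : ℂ), 0), ((r₀ : ℂ) * Complex.exp (2 * (Real.pi : ℂ) * Complex.I / 3), 0),
        ((r₀ : ℂ) * Complex.exp (-(2 * (Real.pi : ℂ) * Complex.I) / 3), 0)} : Set (ℂ × ℝ)) ⊆ S)
    (hS : ∀ p ∈ S, ∀ q ∈ S, p ≠ q → kd p q = 1) :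
    S.encard ≤ 4 := by
  dsimp only at hS₃
  set r₀ : ℝ := (12 : ℝ) ^ (-(1 : ℝ) / 4)
  set T : Set (ℂ × ℝ) := {((r₀ : ℂ), 0), ((r₀ : ℂ) * exp (2 * π * I / 3), 0),
    ((r₀ : ℂ) * exp (-(2 * π * I) / 3), 0)}
  have hr₀ : 0 < r₀ := by positivity
  have hr₀4 : r₀ ^ 4 = 1 / 12 := by
    rw [← Real.rpow_natCast, ← Real.rpow_mul (by norm_num)]
    norm_num
  have haxis : ∀ p ∈ S \ T, p.1 = 0 ∧ p.2 ^ 2 = 11 / 12 := by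
    rintro p ⟨hpS, hpT⟩
    have hd : ∀ v ∈ T, kd p v = 1 := fun v hv ↦
      hS p hpS v (hS₃ hv) (ne_of_mem_of_not_mem hv hpT).symm
    obtain ⟨hz, ht⟩ := fst_eq_zero_and_snd_sq_of_kd_triangle_eq_one hr₀ (hd _ (by simp [T]))
      (hd _ (by simp [T])) (hd _ (by simp [T]))
    exact ⟨hz, by linarith⟩
  have hrest : (S \ T).Subsingleton :=
    subsingleton_of_pairwise_kd_eq_one_on_axis (by norm_num) haxis fun p hp q hq ↦ hS p hp.1 q hq.1
  calc S.encard ≤ (S \ T).encard + T.encard := Set.encard_le_encard_sdiff_add_encard S T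
    _ ≤ 1 + 3 := add_le_add (Set.encard_le_one_iff_subsingleton.mpr hrest) (Set.encard_triple_le ..)
    _ = 4 := rfl
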